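/- Let H ∈ (0, 1/2) and define R_H(s,t) = (1/2)·( s^{2H} + t^{2H} − |t−s|^{2H} ) for s,t ≥ 0. Then there exists a constant C_H > 0, depending only on H, such that for every integer n ≥ 1: sup_{t ∈ [0,1]} Σ_{k=0}^{n−1} | R_H(t, (k+1)/n) − R_H(t, k/n) | ≤ C_H. -/

import Mathlib

/-- Covariance function of fractional Brownian motion with Hurst parameter `H`. -/
noncomputable def fbmCov (H : ℝ) (s t : ℝ) : ℝ :=
  (1 / 2) * (s ^ (2 * H) + t ^ (2 * H) - |t - s| ^ (2 * H))

/-!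
For fixed `t ≥ 0`, write `|s - t| ^ 2H = (s - t)₊ ^ 2H + (t - s)₊ ^ 2H`. Then
`s ↦ R_H(t, s)` is the difference of the two nondecreasing functions
`s ↦ (s ^ 2H + t ^ 2H - (t - s)₊ ^ 2H) / 2` and `s ↦ (s - t)₊ ^ 2H / 2` on `[0, ∞)`,
so along any increasing grid of `[0, 1]` the sum of the absolute increments of `R_H(t, ·)`
telescopes to at most the total increase of the two parts, which is at most `3 / 2`.
-/

open Finset Set

theorem sum_range_abs_sub_le_of_eqOn_sub {α : Type*} [Preorder α] {f g h : α → ℝ} {s : Set α}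
    (hf : EqOn f (g - h) s) (hg : MonotoneOn g s) (hh : MonotoneOn h s)
    {u : ℕ → α} (hu : Monotone u) (hus : ∀ k, u k ∈ s) (n : ℕ) :
    ∑ k ∈ range n, |f (u (k + 1)) - f (u k)| ≤ (g (u n) - g (u 0)) + (h (u n) - h (u 0)) := by
  have hstep (k : ℕ) :
      |f (u (k + 1)) - f (u k)| ≤ (g (u (k + 1)) - g (u k)) + (h (u (k + 1)) - h (u k)) := by
    have hmono := hu k.le_succ
    have hg' := hg (hus k) (hus (k + 1)) hmono
    have hh' := hh (hus k) (hus (k + 1)) hmono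
    rw [hf (hus k), hf (hus (k + 1))]
    simp only [Pi.sub_apply]
    rw [abs_le]
    constructor <;> linarith
  calc ∑ k ∈ range n, |f (u (k + 1)) - f (u k)|
      ≤ ∑ k ∈ range n, ((g (u (k + 1)) - g (u k)) + (h (u (k + 1)) - h (u k))) :=
        sum_le_sum fun k _ => hstep k
    _ = (g (u n) - g (u 0)) + (h (u n) - h (u 0)) := by
        rw [sum_add_distrib, sum_range_sub (fun k => g (u k)), sum_range_sub (fun k => h (u k))]

theorem abs_sub_rpow_eq_max_rpow_add_max_rpow {p : ℝ} (hp : 0 < p) (s t : ℝ) :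
    |s - t| ^ p = max (s - t) 0 ^ p + max (t - s) 0 ^ p := by
  rcases le_total t s with h | h
  · rw [abs_of_nonneg (sub_nonneg.2 h), max_eq_left (sub_nonneg.2 h),
      max_eq_right (sub_nonpos.2 h), Real.zero_rpow hp.ne', add_zero]
  · rw [abs_of_nonpos (sub_nonpos.2 h), neg_sub, max_eq_right (sub_nonpos.2 h),
      max_eq_left (sub_nonneg.2 h), Real.zero_rpow hp.ne', zero_add]

theorem monotone_max_sub_rpow {p : ℝ} (hp : 0 ≤ p) (t : ℝ) :
    Monotone fun s : ℝ => max (s - t) 0 ^ p :=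
  fun _ _ h => Real.rpow_le_rpow (le_max_right _ _) (max_le_max (by linarith) le_rfl) hp

theorem antitone_max_sub_rpow {p : ℝ} (hp : 0 ≤ p) (t : ℝ) :
    Antitone fun s : ℝ => max (t - s) 0 ^ p :=
  fun _ _ h => Real.rpow_le_rpow (le_max_right _ _) (max_le_max (by linarith) le_rfl) hp

section fbmCov

variable {H : ℝ}

theorem fbmCov_eq_sub (hH : 0 < H) (t s : ℝ) :
    fbmCov H t s = (s ^ (2 * H) + t ^ (2 * H) - max (t - s) 0 ^ (2 * H)) / 2
      - max (s - t) 0 ^ (2 * H) / 2 := by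
  rw [fbmCov, abs_sub_rpow_eq_max_rpow_add_max_rpow (by positivity)]
  ring

theorem monotoneOn_fbmCov_increasing_part (hH : 0 ≤ H) (t : ℝ) :
    MonotoneOn (fun s => (s ^ (2 * H) + t ^ (2 * H) - max (t - s) 0 ^ (2 * H)) / 2) (Ici 0) := by
  intro a ha b _ hab
  have := Real.rpow_le_rpow ha hab (by positivity : 0 ≤ 2 * H)
  have := antitone_max_sub_rpow (by positivity : 0 ≤ 2 * H) t hab
  dsimp only
  linarith

end fbmCov

theorem fbm_increment_inner_product_sum_bound
    (H : ℝ) (hH : H ∈ Set.Ioo (0 : ℝ) (1 / 2)) :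
    ∃ C : ℝ, 0 < C ∧ ∀ n : ℕ, 1 ≤ n → ∀ t ∈ Set.Icc (0 : ℝ) 1,
      ∑ k ∈ Finset.range n,
        |fbmCov H t ((k + 1 : ℝ) / n) - fbmCov H t ((k : ℝ) / n)| ≤ C := by
  obtain ⟨hH0, -⟩ := hH
  have hp : 0 < 2 * H := by positivity
  refine ⟨3 / 2, by norm_num, fun n hn t ⟨ht0, ht1⟩ => ?_⟩
  have hgrid : Monotone fun k : ℕ => (k : ℝ) / n := fun j k hjk => by dsimp only; gcongr
  have key := sum_range_abs_sub_le_of_eqOn_sub (fun s _ => fbmCov_eq_sub hH0 t s)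
    (monotoneOn_fbmCov_increasing_part hH0.le t)
    (((monotone_max_sub_rpow hp.le t).div_const two_pos.le).monotoneOn _) hgrid
    (fun k => mem_Ici.2 (by positivity)) n
  push_cast at key
  rw [zero_div, div_self (Nat.cast_pos.2 hn).ne'] at key
  refine key.trans ?_
  have htp : t ^ (2 * H) ≤ 1 := Real.rpow_le_one ht0 ht1 hp.le
  have hrest : max (1 - t) 0 ^ (2 * H) ≤ 1 :=
    Real.rpow_le_one (le_max_right _ _) (max_le (by linarith) zero_le_one) hp.le
  rw [max_eq_right (by linarith : t - 1 ≤ 0), max_eq_right (by linarith : 0 - t ≤ 0), sub_zero,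
    max_eq_left ht0, Real.one_rpow, Real.zero_rpow hp.ne']
  linarith
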